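/- arXiv:2403.00149 — 2 statements merged into one kernel-verified Lean document; each statement's English description precedes it below -/
import Mathlib

section
/- Let P(x) = a₋₁x⁻¹ + a₀ + a₁x with integer coefficients, a_n = ct[P(x)^n], and let p be a prime dividing a_z for some 0 < z < p. Let b_n = Σ_{i=0}^{h} c_i · a_{n+i} with integers c_i. Then the sequence (b_n mod p) contains arbitrarily long runs of consecutive zeros; in particular, for every N there exists n such that b_n ≡ b_{n+1} ≡ … ≡ b_{n+N} ≡ 0 (mod p). -/
open LaurentPolynomial

/-- The constant term of an integer Laurent polynomial. -/
noncomputable def ct (Q : LaurentPolynomial ℤ) : ℤ := Q.coeff 0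

/-- The Laurent trinomial `a₋₁ x⁻¹ + a₀ + a₁ x`. -/
noncomputable def Ptri (am1 a0 a1 : ℤ) : LaurentPolynomial ℤ :=
  C am1 * T (-1) + C a0 + C a1 * T 1

/-!
Reduce mod `p`. Over `𝔽_p` the Frobenius gives `P ^ p ^ K = P(x ^ p ^ K)`, while `P ^ m` only has
exponents in `[-m, m]`. For `m < p ^ K` the constant term of `P(x ^ p ^ K) ^ z * P ^ m` therefore
only sees the two constant terms, so `a_{p^K z + m} ≡ a_z a_m (mod p)`. Taking `K = N + h` and
`n = p ^ K z`, every `a_{n+j+i}` with `j ≤ N`, `i ≤ h` is a multiple of `a_z`, hence of `p`.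
-/

open AddMonoidAlgebra

namespace LaurentPolynomial

section Semiring

variable {R : Type*} [Semiring R]

noncomputable def expand (d : ℕ) : R[T;T⁻¹] →+* R[T;T⁻¹] :=
  mapDomainRingHom R (AddMonoidHom.mulLeft (d : ℤ))

@[simp]
lemma expand_single (d : ℕ) (n : ℤ) (r : R) : expand d (single n r) = single (d * n) r :=
  mapDomain_single

lemma coeff_expand_mul {d : ℕ} (hd : d ≠ 0) (f : R[T;T⁻¹]) (n : ℤ) :
    (expand d f).coeff (d * n) = f.coeff n := by
  rw [expand, mapDomainRingHom_apply, coeff_mapDomain]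
  exact Finsupp.mapDomain_apply (mul_right_injective₀ (by exact_mod_cast hd)) _ _

lemma dvd_of_mem_support_expand (d : ℕ) (f : R[T;T⁻¹]) {k : ℤ}
    (hk : k ∈ (expand d f).coeff.support) : (d : ℤ) ∣ k := by
  classical
  rw [expand, mapDomainRingHom_apply, coeff_mapDomain] at hk
  obtain ⟨n, -, rfl⟩ := Finset.mem_image.mp (Finsupp.mapDomain_support hk)
  exact dvd_mul_right _ n

lemma coeff_zero_expand_mul {d : ℕ} (hd : d ≠ 0) (f g : R[T;T⁻¹])
    (hg : ∀ k ∈ g.coeff.support, k.natAbs < d) :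
    (expand d f * g).coeff 0 = f.coeff 0 * g.coeff 0 := by
  classical
  have hcross : ∀ k ∈ (expand d f).coeff.support, ∀ l ∈ g.coeff.support, k + l = 0 → k = 0 := by
    intro k hk l hl hkl
    refine Int.eq_zero_of_abs_lt_dvd (dvd_of_mem_support_expand d f hk) ?_
    rw [eq_neg_of_add_eq_zero_left hkl, abs_neg, Int.abs_eq_natAbs]
    exact_mod_cast hg l hl
  rw [coeff_mul, Finsupp.sum_eq_single 0, Finsupp.sum_eq_single 0]
  · simpa using congrArg (· * g.coeff 0) (coeff_expand_mul hd f 0)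
  · intro l _ hl
    simp [hl]
  · simp
  · intro k hk hk0
    exact Finset.sum_eq_zero fun l hl ↦
      if_neg (mt (hcross k (Finsupp.mem_support_iff.2 hk) l hl) hk0)
  · simp

lemma natAbs_le_of_mem_support_pow {f : R[T;T⁻¹]} {r : ℕ}
    (hf : ∀ k ∈ f.coeff.support, k.natAbs ≤ r) (m : ℕ) :
    ∀ k ∈ (f ^ m).coeff.support, k.natAbs ≤ m * r := by
  have hsup := sup_support_pow_le (degb := Int.natAbs) le_rfl Int.natAbs_add_le m f
  rw [smul_eq_mul] at hsup
  exact Finset.sup_le_iff.mp (hsup.trans (Nat.mul_le_mul_left m (Finset.sup_le hf)))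

end Semiring

section ZMod

variable {p : ℕ} [Fact p.Prime]

lemma pow_char_pow_eq_expand (f : (ZMod p)[T;T⁻¹]) (n : ℕ) : f ^ p ^ n = expand (p ^ n) f := by
  have := expChar_of_injective_algebraMap (algebraMap (ZMod p) (ZMod p)[T;T⁻¹]).injective p
  induction f using AddMonoidAlgebra.induction_linear with
  | zero => simp [zero_pow (pow_ne_zero n (Fact.out : p.Prime).ne_zero)]
  | add f g hf hg => rw [add_pow_expChar_pow, hf, hg, map_add]
  | single k r => rw [single_pow, expand_single, ZMod.pow_card_pow, nsmul_eq_mul]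

lemma coeff_zero_pow_char_pow_mul_add {f : (ZMod p)[T;T⁻¹]} {r : ℕ}
    (hf : ∀ k ∈ f.coeff.support, k.natAbs ≤ r) {n m : ℕ} (hm : m * r < p ^ n) (z : ℕ) :
    (f ^ (p ^ n * z + m)).coeff 0 = (f ^ z).coeff 0 * (f ^ m).coeff 0 := by
  rw [pow_add, pow_mul, pow_char_pow_eq_expand, ← map_pow,
    coeff_zero_expand_mul (pow_ne_zero n (Fact.out : p.Prime).ne_zero)]
  exact fun k hk ↦ (natAbs_le_of_mem_support_pow hf m k hk).trans_lt hm

end ZMod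

end LaurentPolynomial

lemma natAbs_le_one_of_mem_support_Ptri (am1 a0 a1 : ℤ) {k : ℤ}
    (hk : k ∈ (Ptri am1 a0 a1).coeff.support) : k.natAbs ≤ 1 := by
  contrapose! hk
  rw [Ptri, ← single_eq_C_mul_T, ← single_eq_C_mul_T, ← single_eq_C]
  simp only [coeff_add, coeff_single, Finsupp.add_apply, Finsupp.single_apply,
    Finsupp.mem_support_iff]
  rw [if_neg (by omega), if_neg (by omega), if_neg (by omega)]
  simp

theorem stmt_12_general (am1 a0 a1 : ℤ) (p : ℕ) (hp : p.Prime) (z : ℕ)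
    (hdvd : (p : ℤ) ∣ ct ((Ptri am1 a0 a1) ^ z)) (h : ℕ) (c : ℕ → ℤ) (N : ℕ) :
    ∃ n : ℕ, ∀ j ≤ N,
      (p : ℤ) ∣ ∑ i ∈ Finset.range (h + 1), c i * ct ((Ptri am1 a0 a1) ^ (n + j + i)) := by
  have := Fact.mk hp
  set P := mapRingHom ℤ (Int.castRingHom (ZMod p)) (Ptri am1 a0 a1)
  have hct (e : ℕ) : ((ct (Ptri am1 a0 a1 ^ e) : ℤ) : ZMod p) = (P ^ e).coeff 0 := by
    rw [ct, ← map_pow, coeff_mapRingHom, eq_intCast (Int.castRingHom (ZMod p))]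
  have hP : ∀ k ∈ P.coeff.support, k.natAbs ≤ 1 := by
    refine fun k hk ↦ natAbs_le_one_of_mem_support_Ptri am1 a0 a1 ?_
    contrapose! hk
    simp_all [P]
  refine ⟨p ^ (N + h) * z, fun j hj ↦ Finset.dvd_sum fun i hi ↦ Dvd.dvd.mul_left ?_ (c i)⟩
  have hm : (j + i) * 1 < p ^ (N + h) := by
    have := Nat.lt_pow_self hp.one_lt (n := N + h)
    rw [Finset.mem_range] at hi
    omega
  rw [← ZMod.intCast_zmod_eq_zero_iff_dvd, hct, add_assoc, coeff_zero_pow_char_pow_mul_add hP hm,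
    ← hct, (ZMod.intCast_zmod_eq_zero_iff_dvd _ _).2 hdvd, zero_mul]

theorem stmt_12 (am1 a0 a1 : ℤ) (p : ℕ) (hp : p.Prime) (z : ℕ) (hz0 : 0 < z) (hzp : z < p)
    (hdvd : (p : ℤ) ∣ ct ((Ptri am1 a0 a1) ^ z)) (h : ℕ) (c : ℕ → ℤ) (N : ℕ) :
    ∃ n : ℕ, ∀ j ≤ N,
      (p : ℤ) ∣ ∑ i ∈ Finset.range (h + 1), c i * ct ((Ptri am1 a0 a1) ^ (n + j + i)) :=
  stmt_12_general am1 a0 a1 p hp z hdvd h c N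
end

section
/- Let p be a prime, P(x) = a₋₁x⁻¹ + a₀ + a₁x with integer coefficients such that p ∤ ct[P(x)^n] for all n, and let a_n = ct[P(x)^n]. If m and m' are nonnegative integers such that for every digit d ∈ {0,…,p−1}, the number of base-p digits of m equal to d is congruent to the number of base-p digits of m' equal to d modulo p−1, then a_m ≡ a_{m'} (mod p). -/
open LaurentPolynomial

/-!
Writing `P = x⁻¹ f(x)` with `f` quadratic, `aₙ` is the coefficient of `xⁿ` in `fⁿ`. Modulo `p`,
`f ^ p = f(x ^ p)`, so for `n = p k + r` with `r < p` we get `fⁿ = fᵏ(x ^ p) · fʳ`; since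
`deg fʳ ≤ 2 r < p + r`, only `x^(p k) · xʳ` contributes to `xⁿ`, whence `aₙ ≡ a_k a_r`. Iterating,
`aₙ` is congruent to the product of `a_d` over the base-`p` digits `d` of `n`. Each `a_d` is a unit
mod `p`, so `a_d ^ (p - 1) ≡ 1` and the product only depends on the digit counts modulo `p - 1`.
-/

namespace Polynomial

variable {R : Type*}

theorem coeff_toLaurent_natCast [Semiring R] (f : R[X]) (n : ℕ) :
    (toLaurent f).coeff n = f.coeff n :=
  Finsupp.mapDomain_apply Nat.castEmbedding.injective _ n

theorem coeff_expand_mul_of_natDegree_lt [CommSemiring R] {p : ℕ} (F G : R[X]) {a r : ℕ}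
    (hr : r < p) (hG : G.natDegree < p + r) :
    (expand R p F * G).coeff (p * a + r) = F.coeff a * G.coeff r := by
  have hp : 0 < p := by omega
  rw [coeff_mul, Finset.sum_eq_single (p * a, r) _ (by simp), coeff_expand_mul' hp]
  rintro ⟨i, j⟩ hij hne
  rw [Finset.HasAntidiagonal.mem_antidiagonal] at hij
  rw [coeff_expand hp]
  split_ifs with hdvd
  · obtain ⟨k, rfl⟩ := hdvd
    dsimp only at hij hne ⊢
    rcases lt_trichotomy k a with hk | rfl | hk
    · have : p * k + p ≤ p * a := by simpa [mul_add] using Nat.mul_le_mul_left p hk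
      rw [coeff_eq_zero_of_natDegree_lt (p := G) (by omega), mul_zero]
    · exact absurd (by simp at hij ⊢; omega) hne
    · have : p * a + p ≤ p * k := by simpa [mul_add] using Nat.mul_le_mul_left p hk
      omega
  · rw [zero_mul]

section FiniteField

variable {K : Type*} [Field K] [Fintype K] {q : ℕ} {f : K[X]}

theorem coeff_pow_self_eq_mul_of_natDegree_le_two (hq : Fintype.card K = q)
    (hf : f.natDegree ≤ 2) (n : ℕ) :
    (f ^ n).coeff n = (f ^ (n / q)).coeff (n / q) * (f ^ (n % q)).coeff (n % q) := by
  have hr : n % q < q := Nat.mod_lt _ (hq ▸ Fintype.card_pos)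
  have hdeg : (f ^ (n % q)).natDegree < q + n % q := by
    have := natDegree_pow_le (p := f) (n := n % q)
    have := Nat.mul_le_mul_left (n % q) hf
    omega
  have hsplit : f ^ n = expand K q (f ^ (n / q)) * f ^ (n % q) := by
    rw [← hq, FiniteField.expand_card, ← pow_mul, ← pow_add, mul_comm, hq, Nat.div_add_mod]
  calc (f ^ n).coeff n
      = (expand K q (f ^ (n / q)) * f ^ (n % q)).coeff (q * (n / q) + n % q) := by
        rw [← hsplit, Nat.div_add_mod]
    _ = _ := coeff_expand_mul_of_natDegree_lt _ _ hr hdeg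

theorem coeff_pow_self_eq_prod_digits (hq : Fintype.card K = q) (hf : f.natDegree ≤ 2) (n : ℕ) :
    (f ^ n).coeff n = ((Nat.digits q n).map fun d => (f ^ d).coeff d).prod := by
  have hq1 : 1 < q := hq ▸ Fintype.one_lt_card
  induction n using Nat.strong_induction_on with
  | _ n ih =>
    rcases Nat.eq_zero_or_pos n with rfl | hn
    · simp
    · rw [Nat.digits_def' hq1 hn, List.map_cons, List.prod_cons,
        coeff_pow_self_eq_mul_of_natDegree_le_two hq hf, ih _ (Nat.div_lt_self hn hq1), mul_comm]

end FiniteField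

end Polynomial

theorem List.prod_map_eq_of_count_modEq {α M : Type*} [DecidableEq α] [CommMonoid M] {k : ℕ}
    {g : α → M} {s : Finset α} {l l' : List α} (hl : ∀ a ∈ l, a ∈ s) (hl' : ∀ a ∈ l', a ∈ s)
    (hg : ∀ a ∈ s, g a ^ k = 1) (hcount : ∀ a ∈ s, l.count a ≡ l'.count a [MOD k]) :
    (l.map g).prod = (l'.map g).prod := by
  have prod_eq : ∀ l : List α, (∀ a ∈ l, a ∈ s) →
      (l.map g).prod = ∏ a ∈ s, g a ^ l.count a := by
    intro l hl
    rw [Finset.prod_list_map_count]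
    refine Finset.prod_subset (fun a ha => hl a (List.mem_toFinset.mp ha)) fun a _ ha => ?_
    rw [List.count_eq_zero_of_not_mem (mt List.mem_toFinset.mpr ha), pow_zero]
  rw [prod_eq l hl, prod_eq l' hl']
  refine Finset.prod_congr rfl fun a ha => ?_
  rw [pow_eq_pow_mod _ (hg a ha), hcount a ha, ← pow_eq_pow_mod _ (hg a ha)]

open Polynomial in
theorem Ptri_eq_T_mul_toLaurent (am1 a0 a1 : ℤ) :
    Ptri am1 a0 a1 =
      T (-1) * toLaurent (Polynomial.C am1 + Polynomial.C a0 * X + Polynomial.C a1 * X ^ 2) := by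
  simp only [Ptri, map_add, map_mul, toLaurent_C, toLaurent_X, toLaurent_X_pow]
  rw [mul_add, mul_add, T_mul, mul_left_comm, ← T_add, mul_left_comm, ← T_add]
  norm_num [T_zero]

open Polynomial in
theorem ct_Ptri_pow (am1 a0 a1 : ℤ) (n : ℕ) :
    ct (Ptri am1 a0 a1 ^ n) =
      ((Polynomial.C am1 + Polynomial.C a0 * X + Polynomial.C a1 * X ^ 2) ^ n).coeff n := by
  rw [Ptri_eq_T_mul_toLaurent, mul_pow, T_pow, ← map_pow, ct, T,
    AddMonoidAlgebra.coeff_single_mul_apply, one_mul, ← coeff_toLaurent_natCast]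
  congr 1
  ring

open Polynomial in
theorem stmt_17 (am1 a0 a1 : ℤ) (p : ℕ) (hp : p.Prime)
    (hndvd : ∀ n : ℕ, ¬ (p : ℤ) ∣ ct ((Ptri am1 a0 a1) ^ n)) (m m' : ℕ)
    (hcount : ∀ d : ℕ, d < p →
      (Nat.digits p m).count d ≡ (Nat.digits p m').count d [MOD p - 1]) :
    ct ((Ptri am1 a0 a1) ^ m) ≡ ct ((Ptri am1 a0 a1) ^ m') [ZMOD (p : ℤ)] := by
  have : Fact p.Prime := ⟨hp⟩
  set f : (ZMod p)[X] := Polynomial.C (am1 : ZMod p) + Polynomial.C (a0 : ZMod p) * X +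
    Polynomial.C (a1 : ZMod p) * X ^ 2
  have hf : f.natDegree ≤ 2 := by unfold f; compute_degree
  have hct (n : ℕ) : (ct (Ptri am1 a0 a1 ^ n) : ZMod p) = (f ^ n).coeff n := by
    rw [ct_Ptri_pow, ← eq_intCast (Int.castRingHom (ZMod p)), ← coeff_map]
    simp [f]
  have hdigits (n : ℕ) : ∀ d ∈ Nat.digits p n, d ∈ Finset.range p := fun d hd =>
    Finset.mem_range.mpr (Nat.digits_lt_base hp.one_lt hd)
  rw [← ZMod.intCast_eq_intCast_iff, hct, hct, coeff_pow_self_eq_prod_digits (ZMod.card p) hf,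
    coeff_pow_self_eq_prod_digits (ZMod.card p) hf]
  refine List.prod_map_eq_of_count_modEq (hdigits m) (hdigits m')
    (fun d _ => ZMod.pow_card_sub_one_eq_one ?_) (fun d hd => hcount d (Finset.mem_range.mp hd))
  rw [← hct]
  exact mt (ZMod.intCast_zmod_eq_zero_iff_dvd _ p).mp (hndvd d)
end
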